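/- Let φ be a CNF formula and let F̄_x, F̄_y be (t⁺,t⁻)-labeled signed subgraphs of F_φ on disjoint vertex sets, and let F̄_z = F̄_x ⊗_{g|f₁,f₂} F̄_y be their labeling composition with relabelings f₁^±, f₂^±, g^±. Let ν be a partial assignment on the variables of F_z, with restrictions ν_x, ν_y, and let Σ_x⁺ = span{lab_x⁺(w) : ν_x(w)=1}, Σ_x⁻ = span{lab_x⁻(w) : ν_x(w)=0}, and analogously Σ_y⁺, Σ_y⁻. Let Π_z⁺ ⊆ GF(2)^{t⁺} and Π_z⁻ ⊆ GF(2)^{t⁻} be arbitrary subspaces, and define Σ_z^± = f₁^±(Σ_x^±) + f₂^±(Σ_y^±), Π_x^± = (f₁^±)ᵀ(Π_z^±) + g^±(Σ_y^±), and Π_y^± = (f₂^±)ᵀ(Π_z^±) + (g^±)ᵀ(Σ_x^±), where the sum of two subspaces is their span and images are taken under the respective linear maps. Then ν is of shape (Σ_z⁺, Σ_z⁻, Π_z⁺, Π_z⁻) in F̄_z if and only if ν_x is of shape (Σ_x⁺, Σ_x⁻, Π_x⁺, Π_x⁻) in F̄_x and ν_y is of shape (Σ_y⁺, Σ_y⁻,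 Π_y⁺, Π_y⁻) in F̄_y. -/

import Mathlib

/-- Scalar product of binary vectors over GF(2). -/
def dotp {t : ℕ} (u v : Fin t → ZMod 2) : ZMod 2 := ∑ i, u i * v i

/-- The signed (bipartite) graph F_φ of a CNF formula φ with variable set `Var` and
clause set `Cl`:  `pos w c` means the literal w occurs in clause c (wc ∈ E⁺), and
`neg w c` means ¬w occurs in c (wc ∈ E⁻); the two edge sets are disjoint. -/
structure SignedBip (Var Cl : Type) where
  pos : Var → Cl → Prop
  neg : Var → Cl → Prop
  disj : ∀ w c, ¬ (pos w c ∧ neg w c)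

/-- The assignment ν satisfies the clause c. -/
def SignedBip.SatClause {Var Cl : Type} (F : SignedBip Var Cl) (ν : Var → Bool) (c : Cl) : Prop :=
  (∃ w, ν w = true ∧ F.pos w c) ∨ (∃ w, ν w = false ∧ F.neg w c)

/-- The assignment ν satisfies the formula φ (every clause of φ). -/
def SignedBip.Satisfies {Var Cl : Type} (F : SignedBip Var Cl) (ν : Var → Bool) : Prop :=
  ∀ c, F.SatClause ν c

/-- A (t⁺,t⁻)-labeled signed (sub)graph: vertex sets `VW ⊆ Var`, `VC ⊆ Cl`,
two edge relations, and labelings lab⁺, lab⁻ into GF(2)^{t⁺}, GF(2)^{t⁻}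
(given on variable vertices and clause vertices separately). -/
structure LabSub (Var Cl : Type) (tp tn : ℕ) where
  pos : Var → Cl → Prop
  neg : Var → Cl → Prop
  VW : Set Var
  VC : Set Cl
  labWp : Var → Fin tp → ZMod 2
  labCp : Cl → Fin tp → ZMod 2
  labWn : Var → Fin tn → ZMod 2
  labCn : Cl → Fin tn → ZMod 2

/-- F₁ is a signed subgraph of F_φ: its edges are edges of F_φ joining vertices of F₁. -/
def LabSub.SubgraphOf {Var Cl : Type} {tp tn : ℕ} (F₁ : LabSub Var Cl tp tn)
    (F : SignedBip Var Cl) : Prop :=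
  ∀ w c, (F₁.pos w c → F.pos w c ∧ w ∈ F₁.VW ∧ c ∈ F₁.VC) ∧
    (F₁.neg w c → F.neg w c ∧ w ∈ F₁.VW ∧ c ∈ F₁.VC)

/-- The partial assignment ν (restricted to the variables of F₁) is of shape
(Σ⁺, Σ⁻, Π⁺, Π⁻) in F̄₁:
(I) Σ⁺ is the span of the lab⁺-labels of the true variables of F₁ and Σ⁻ the span of the
lab⁻-labels of the false variables of F₁; and
(II) every clause vertex c of F₁ is adjacent in F₁⁺ to a true variable, or adjacent
in F₁⁻ to a false variable, or lab⁺(c) is non-orthogonal to Π⁺, or lab⁻(c) is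
non-orthogonal to Π⁻. -/
def LabSub.Shape {Var Cl : Type} {tp tn : ℕ} (F₁ : LabSub Var Cl tp tn) (ν : Var → Bool)
    (Sp : Submodule (ZMod 2) (Fin tp → ZMod 2)) (Sn : Submodule (ZMod 2) (Fin tn → ZMod 2))
    (Pp : Submodule (ZMod 2) (Fin tp → ZMod 2)) (Pn : Submodule (ZMod 2) (Fin tn → ZMod 2)) :
    Prop :=
  Sp = Submodule.span (ZMod 2) (F₁.labWp '' {w | w ∈ F₁.VW ∧ ν w = true}) ∧
  Sn = Submodule.span (ZMod 2) (F₁.labWn '' {w | w ∈ F₁.VW ∧ ν w = false}) ∧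
  ∀ c ∈ F₁.VC,
    (∃ w ∈ F₁.VW, ν w = true ∧ F₁.pos w c) ∨
    (∃ w ∈ F₁.VW, ν w = false ∧ F₁.neg w c) ∨
    (∃ v ∈ Pp, dotp (F₁.labCp c) v = 1) ∨
    (∃ v ∈ Pn, dotp (F₁.labCn c) v = 1)

open Classical in
/-- The labeling composition F̄_z = F̄_x ⊗_{g|f₁,f₂} F̄_y of two (t⁺,t⁻)-labeled signed
subgraphs on disjoint vertex sets, where the relabelings f₁^±, f₂^±, g^± are given by
binary matrices: positive edges are those of F_x⁺, those of F_y⁺, and all cross pairs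
{u,v}, u ∈ V(F_x), v ∈ V(F_y), with lab_x⁺(u)·g⁺(lab_y⁺(v)) = 1 (analogously for the
negative edges, using g⁻); the new labelings are lab_z^± = f₁^± ∘ lab_x^± on V(F_x) and
lab_z^± = f₂^± ∘ lab_y^± on V(F_y). -/
noncomputable def LabSub.compose {Var Cl : Type} {tp tn : ℕ}
    (Fx Fy : LabSub Var Cl tp tn)
    (f1p f2p gp : Matrix (Fin tp) (Fin tp) (ZMod 2))
    (f1n f2n gn : Matrix (Fin tn) (Fin tn) (ZMod 2)) : LabSub Var Cl tp tn where
  pos w c := Fx.pos w c ∨ Fy.pos w c ∨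
    (w ∈ Fx.VW ∧ c ∈ Fy.VC ∧ dotp (Fx.labWp w) (gp.mulVec (Fy.labCp c)) = 1) ∨
    (c ∈ Fx.VC ∧ w ∈ Fy.VW ∧ dotp (Fx.labCp c) (gp.mulVec (Fy.labWp w)) = 1)
  neg w c := Fx.neg w c ∨ Fy.neg w c ∨
    (w ∈ Fx.VW ∧ c ∈ Fy.VC ∧ dotp (Fx.labWn w) (gn.mulVec (Fy.labCn c)) = 1) ∨
    (c ∈ Fx.VC ∧ w ∈ Fy.VW ∧ dotp (Fx.labCn c) (gn.mulVec (Fy.labWn w)) = 1)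
  VW := Fx.VW ∪ Fy.VW
  VC := Fx.VC ∪ Fy.VC
  labWp w := if w ∈ Fx.VW then f1p.mulVec (Fx.labWp w) else f2p.mulVec (Fy.labWp w)
  labCp c := if c ∈ Fx.VC then f1p.mulVec (Fx.labCp c) else f2p.mulVec (Fy.labCp c)
  labWn w := if w ∈ Fx.VW then f1n.mulVec (Fx.labWn w) else f2n.mulVec (Fy.labWn w)
  labCn c := if c ∈ Fx.VC then f1n.mulVec (Fx.labCn c) else f2n.mulVec (Fy.labCn c)

/-!
Both conditions of a shape split by sign and are treated one sign at a time. The selected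
variables of `F̄_z` carry the `f₁`- and `f₂`-images of their labels in `F̄_x` and `F̄_y`, which
gives `Σ_z`. A clause `c` of `F̄_x` keeps its neighbours in `F_x` and gains the variables `w` of
`F_y` with `lab(c) · g(lab(w)) = 1`. Over GF(2) a vector is non-orthogonal to a span iff it is
non-orthogonal to one of the generators, so such a selected `w` exists iff `lab(c)` is
non-orthogonal to `g(Σ_y)`; and `f₁(lab(c))` is non-orthogonal to `Π_z` iff `lab(c)` is
non-orthogonal to `f₁ᵀ(Π_z)`. Hence `c` satisfies condition (II) for `Π_z` in `F̄_z` iff it does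
for `Π_x` in `F̄_x`. Clauses of `F̄_y` are handled alike, with `gᵀ` in place of `g`.
-/

open Matrix Submodule

section Dotp

variable {t : ℕ}

theorem dotp_eq_dotProduct (u v : Fin t → ZMod 2) : dotp u v = u ⬝ᵥ v := rfl

theorem dotp_comm (u v : Fin t → ZMod 2) : dotp u v = dotp v u := dotProduct_comm u v

theorem dotp_mulVec (M : Matrix (Fin t) (Fin t) (ZMod 2)) (u v : Fin t → ZMod 2) :
    dotp u (M *ᵥ v) = dotp (Mᵀ *ᵥ u) v := by
  simp only [dotp_eq_dotProduct, dotProduct_mulVec, mulVec_transpose]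

theorem exists_mem_span_dotp_eq_one_iff (u : Fin t → ZMod 2) (T : Set (Fin t → ZMod 2)) :
    (∃ v ∈ span (ZMod 2) T, dotp u v = 1) ↔ ∃ v ∈ T, dotp u v = 1 := by
  refine ⟨fun ⟨v, hv, huv⟩ => ?_, fun ⟨v, hv, huv⟩ => ⟨v, subset_span hv, huv⟩⟩
  by_contra! hT
  -- over GF(2) a scalar different from 1 is 0, so `dotp u` vanishes on `T`, hence on its span
  have hzero : Set.EqOn (dotProductBilin (ZMod 2) (ZMod 2) u)
      (0 : (Fin t → ZMod 2) →ₗ[ZMod 2] ZMod 2) T := fun v hv =>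
    (by decide : ∀ a : ZMod 2, a ≠ 1 → a = 0) _ (hT v hv)
  exact zero_ne_one ((LinearMap.eqOn_span hzero hv).symm.trans huv)

theorem exists_mem_sup_dotp_eq_one_iff (u : Fin t → ZMod 2)
    (A B : Submodule (ZMod 2) (Fin t → ZMod 2)) :
    (∃ v ∈ A ⊔ B, dotp u v = 1) ↔ (∃ v ∈ A, dotp u v = 1) ∨ ∃ v ∈ B, dotp u v = 1 := by
  refine ⟨fun ⟨v, hv, huv⟩ => ?_, ?_⟩
  · obtain ⟨a, ha, b, hb, rfl⟩ := mem_sup.mp hv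
    rw [dotp_eq_dotProduct, dotProduct_add] at huv
    exact ((by decide : ∀ x y : ZMod 2, x + y = 1 → x = 1 ∨ y = 1) _ _ huv).imp
      (fun h => ⟨a, ha, h⟩) (fun h => ⟨b, hb, h⟩)
  · rintro (⟨v, hv, huv⟩ | ⟨v, hv, huv⟩)
    exacts [⟨v, mem_sup_left hv, huv⟩, ⟨v, mem_sup_right hv, huv⟩]

theorem exists_mem_map_dotp_eq_one_iff (u : Fin t → ZMod 2) (M : Matrix (Fin t) (Fin t) (ZMod 2))
    (P : Submodule (ZMod 2) (Fin t → ZMod 2)) :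
    (∃ v ∈ P.map M.mulVecLin, dotp u v = 1) ↔ ∃ v ∈ P, dotp (Mᵀ *ᵥ u) v = 1 := by
  simp only [mem_map, mulVecLin_apply, ← dotp_mulVec]
  exact ⟨fun ⟨_, ⟨v, hv, rfl⟩, huv⟩ => ⟨v, hv, huv⟩, fun ⟨v, hv, huv⟩ => ⟨_, ⟨v, hv, rfl⟩, huv⟩⟩

theorem exists_mem_map_span_image_dotp_eq_one_iff {α : Type*} (u : Fin t → ZMod 2)
    (M : Matrix (Fin t) (Fin t) (ZMod 2)) (l : α → Fin t → ZMod 2) (S : Set α) :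
    (∃ v ∈ (span (ZMod 2) (l '' S)).map M.mulVecLin, dotp u v = 1) ↔
      ∃ w ∈ S, dotp u (M *ᵥ l w) = 1 := by
  rw [map_span, exists_mem_span_dotp_eq_one_iff, ← Set.image_comp, Set.exists_mem_image]
  rfl

end Dotp

/-- One sign of a labeled signed graph: its edges of that sign and its labels of that sign. -/
structure LabGraph (Var Cl : Type) (t : ℕ) where
  adj : Var → Cl → Prop
  labW : Var → Fin t → ZMod 2
  labC : Cl → Fin t → ZMod 2

namespace LabGraph

variable {Var Cl : Type} {t : ℕ}

def EdgesWithin (G : LabGraph Var Cl t) (VW : Set Var) (VC : Set Cl) : Prop :=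
  ∀ w c, G.adj w c → w ∈ VW ∧ c ∈ VC

def labelSpan (G : LabGraph Var Cl t) (VW : Set Var) (s : Var → Prop) :
    Submodule (ZMod 2) (Fin t → ZMod 2) :=
  span (ZMod 2) (G.labW '' {w | w ∈ VW ∧ s w})

/-- One sign's half of condition (II) of a shape, for the clause `c`. -/
def Covered (G : LabGraph Var Cl t) (VW : Set Var) (s : Var → Prop)
    (P : Submodule (ZMod 2) (Fin t → ZMod 2)) (c : Cl) : Prop :=
  (∃ w ∈ VW, s w ∧ G.adj w c) ∨ ∃ v ∈ P, dotp (G.labC c) v = 1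

open Classical in
noncomputable def compose (Gx Gy : LabGraph Var Cl t) (VWx : Set Var) (VCx : Set Cl)
    (VWy : Set Var) (VCy : Set Cl) (f1 f2 g : Matrix (Fin t) (Fin t) (ZMod 2)) :
    LabGraph Var Cl t where
  adj w c := Gx.adj w c ∨ Gy.adj w c ∨
    (w ∈ VWx ∧ c ∈ VCy ∧ dotp (Gx.labW w) (g *ᵥ Gy.labC c) = 1) ∨
    (c ∈ VCx ∧ w ∈ VWy ∧ dotp (Gx.labC c) (g *ᵥ Gy.labW w) = 1)
  labW w := if w ∈ VWx then f1 *ᵥ Gx.labW w else f2 *ᵥ Gy.labW w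
  labC c := if c ∈ VCx then f1 *ᵥ Gx.labC c else f2 *ᵥ Gy.labC c

section Compose

variable {Gx Gy : LabGraph Var Cl t} {VWx VWy : Set Var} {VCx VCy : Set Cl}
  {f1 f2 g : Matrix (Fin t) (Fin t) (ZMod 2)} {s : Var → Prop}
  {P : Submodule (ZMod 2) (Fin t → ZMod 2)}

theorem labelSpan_compose (hd : Disjoint VWx VWy) :
    (Gx.compose Gy VWx VCx VWy VCy f1 f2 g).labelSpan (VWx ∪ VWy) s =
      (Gx.labelSpan VWx s).map f1.mulVecLin ⊔ (Gy.labelSpan VWy s).map f2.mulVecLin := by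
  have hsplit : {w | w ∈ VWx ∪ VWy ∧ s w} = {w | w ∈ VWx ∧ s w} ∪ {w | w ∈ VWy ∧ s w} := by
    ext w; simp only [Set.mem_union, Set.mem_ofPred_eq, or_and_right]
  have hx : (Gx.compose Gy VWx VCx VWy VCy f1 f2 g).labW '' {w | w ∈ VWx ∧ s w} =
      f1.mulVecLin '' (Gx.labW '' {w | w ∈ VWx ∧ s w}) := by
    rw [← Set.image_comp]
    exact Set.image_congr fun w hw => if_pos hw.1
  have hy : (Gx.compose Gy VWx VCx VWy VCy f1 f2 g).labW '' {w | w ∈ VWy ∧ s w} =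
      f2.mulVecLin '' (Gy.labW '' {w | w ∈ VWy ∧ s w}) := by
    rw [← Set.image_comp]
    exact Set.image_congr fun w hw => if_neg (Set.disjoint_right.mp hd hw.1)
  rw [labelSpan, hsplit, Set.image_union, hx, hy, span_union, span_image, span_image]
  rfl

theorem compose_adj_iff_of_mem_left (hy : Gy.EdgesWithin VWy VCy) (hd : Disjoint VCx VCy)
    {c : Cl} (hc : c ∈ VCx) (w : Var) :
    (Gx.compose Gy VWx VCx VWy VCy f1 f2 g).adj w c ↔
      Gx.adj w c ∨ (w ∈ VWy ∧ dotp (Gx.labC c) (g *ᵥ Gy.labW w) = 1) := by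
  have hcy : c ∉ VCy := Set.disjoint_left.mp hd hc
  have hwc : ¬ Gy.adj w c := fun h => hcy (hy w c h).2
  simp only [compose, hc, hcy, hwc, false_and, and_false, true_and, false_or]

theorem compose_adj_iff_of_mem_right (hx : Gx.EdgesWithin VWx VCx) (hd : Disjoint VCx VCy)
    {c : Cl} (hc : c ∈ VCy) (w : Var) :
    (Gx.compose Gy VWx VCx VWy VCy f1 f2 g).adj w c ↔
      Gy.adj w c ∨ (w ∈ VWx ∧ dotp (Gy.labC c) (gᵀ *ᵥ Gx.labW w) = 1) := by
  have hcx : c ∉ VCx := Set.disjoint_right.mp hd hc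
  have hwc : ¬ Gx.adj w c := fun h => hcx (hx w c h).2
  simp only [compose, hc, hcx, hwc, false_and, true_and, false_or, or_false,
    dotp_mulVec, dotp_comm (Gy.labC c)]

/-- A selected new neighbour of `c` exists iff `G.labC c` is not orthogonal to
`h (H.labelSpan V' s)`, and `f (G.labC c)` is not orthogonal to `P` iff `G.labC c` is not
orthogonal to `fᵀ P`. -/
theorem covered_iff_of_adj_iff {G G' H : LabGraph Var Cl t} {V V' : Set Var}
    {f h : Matrix (Fin t) (Fin t) (ZMod 2)} {c : Cl}
    (hG : ∀ w, G.adj w c → w ∈ V)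
    (hG' : ∀ w, G'.adj w c ↔ G.adj w c ∨ (w ∈ V' ∧ dotp (G.labC c) (h *ᵥ H.labW w) = 1))
    (hlab : G'.labC c = f *ᵥ G.labC c) :
    G'.Covered (V ∪ V') s P c ↔
      G.Covered V s (P.map fᵀ.mulVecLin ⊔ (H.labelSpan V' s).map h.mulVecLin) c := by
  have hnbr : (∃ w ∈ V ∪ V', s w ∧ G'.adj w c) ↔
      (∃ w ∈ V, s w ∧ G.adj w c) ∨
        ∃ w ∈ {w | w ∈ V' ∧ s w}, dotp (G.labC c) (h *ᵥ H.labW w) = 1 := by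
    simp only [hG', Set.mem_union, Set.mem_ofPred_eq]
    constructor
    · rintro ⟨w, -, hw, hadj | ⟨hw', hdot⟩⟩
      exacts [Or.inl ⟨w, hG w hadj, hw, hadj⟩, Or.inr ⟨w, ⟨hw', hw⟩, hdot⟩]
    · rintro (⟨w, hwV, hw, hadj⟩ | ⟨w, ⟨hw', hw⟩, hdot⟩)
      exacts [⟨w, Or.inl hwV, hw, Or.inl hadj⟩, ⟨w, Or.inr hw', hw, Or.inr ⟨hw', hdot⟩⟩]
  rw [Covered, Covered, hnbr, exists_mem_sup_dotp_eq_one_iff, exists_mem_map_dotp_eq_one_iff,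
    transpose_transpose, labelSpan, exists_mem_map_span_image_dotp_eq_one_iff, hlab, or_assoc]
  exact or_congr_right or_comm

theorem covered_compose_iff_of_mem_left (hx : Gx.EdgesWithin VWx VCx)
    (hy : Gy.EdgesWithin VWy VCy) (hd : Disjoint VCx VCy) {c : Cl} (hc : c ∈ VCx) :
    (Gx.compose Gy VWx VCx VWy VCy f1 f2 g).Covered (VWx ∪ VWy) s P c ↔
      Gx.Covered VWx s (P.map f1ᵀ.mulVecLin ⊔ (Gy.labelSpan VWy s).map g.mulVecLin) c :=
  covered_iff_of_adj_iff (fun w hw => (hx w c hw).1)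
    (compose_adj_iff_of_mem_left hy hd hc) (if_pos hc)

theorem covered_compose_iff_of_mem_right (hx : Gx.EdgesWithin VWx VCx)
    (hy : Gy.EdgesWithin VWy VCy) (hd : Disjoint VCx VCy) {c : Cl} (hc : c ∈ VCy) :
    (Gx.compose Gy VWx VCx VWy VCy f1 f2 g).Covered (VWx ∪ VWy) s P c ↔
      Gy.Covered VWy s (P.map f2ᵀ.mulVecLin ⊔ (Gx.labelSpan VWx s).map gᵀ.mulVecLin) c := by
  rw [Set.union_comm VWx]
  exact covered_iff_of_adj_iff (fun w hw => (hy w c hw).1)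
    (compose_adj_iff_of_mem_right hx hd hc) (if_neg (Set.disjoint_right.mp hd hc))

end Compose

end LabGraph

namespace LabSub

variable {Var Cl : Type} {tp tn : ℕ}

def posPart (F₁ : LabSub Var Cl tp tn) : LabGraph Var Cl tp := ⟨F₁.pos, F₁.labWp, F₁.labCp⟩

def negPart (F₁ : LabSub Var Cl tp tn) : LabGraph Var Cl tn := ⟨F₁.neg, F₁.labWn, F₁.labCn⟩

theorem SubgraphOf.posPart_edgesWithin {F₁ : LabSub Var Cl tp tn} {F : SignedBip Var Cl}
    (h : F₁.SubgraphOf F) : F₁.posPart.EdgesWithin F₁.VW F₁.VC :=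
  fun w c hwc => ((h w c).1 hwc).2

theorem SubgraphOf.negPart_edgesWithin {F₁ : LabSub Var Cl tp tn} {F : SignedBip Var Cl}
    (h : F₁.SubgraphOf F) : F₁.negPart.EdgesWithin F₁.VW F₁.VC :=
  fun w c hwc => ((h w c).2 hwc).2

theorem shape_iff_of_eq {F₁ : LabSub Var Cl tp tn} {ν : Var → Bool}
    {Sp Pp : Submodule (ZMod 2) (Fin tp → ZMod 2)} {Sn Pn : Submodule (ZMod 2) (Fin tn → ZMod 2)}
    (hSp : Sp = F₁.posPart.labelSpan F₁.VW (ν · = true))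
    (hSn : Sn = F₁.negPart.labelSpan F₁.VW (ν · = false)) :
    F₁.Shape ν Sp Sn Pp Pn ↔ ∀ c ∈ F₁.VC,
      F₁.posPart.Covered F₁.VW (ν · = true) Pp c ∨ F₁.negPart.Covered F₁.VW (ν · = false) Pn c :=
  (and_iff_right hSp).trans <| (and_iff_right hSn).trans <|
    forall₂_congr fun _ _ => or_assoc.symm.trans or_or_or_comm

variable (Fx Fy : LabSub Var Cl tp tn) (f1p f2p gp : Matrix (Fin tp) (Fin tp) (ZMod 2))
  (f1n f2n gn : Matrix (Fin tn) (Fin tn) (ZMod 2))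

theorem compose_posPart : (Fx.compose Fy f1p f2p gp f1n f2n gn).posPart =
    Fx.posPart.compose Fy.posPart Fx.VW Fx.VC Fy.VW Fy.VC f1p f2p gp := rfl

theorem compose_negPart : (Fx.compose Fy f1p f2p gp f1n f2n gn).negPart =
    Fx.negPart.compose Fy.negPart Fx.VW Fx.VC Fy.VW Fy.VC f1n f2n gn := rfl

end LabSub

theorem statement_9_general {Var Cl : Type} {tp tn : ℕ}
    (F : SignedBip Var Cl) (Fx Fy : LabSub Var Cl tp tn)
    (hx : Fx.SubgraphOf F) (hy : Fy.SubgraphOf F)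
    (hdW : Disjoint Fx.VW Fy.VW) (hdC : Disjoint Fx.VC Fy.VC)
    (f1p f2p gp : Matrix (Fin tp) (Fin tp) (ZMod 2))
    (f1n f2n gn : Matrix (Fin tn) (Fin tn) (ZMod 2))
    (ν : Var → Bool)
    (Sxp Syp Szp Pxp Pyp Pzp : Submodule (ZMod 2) (Fin tp → ZMod 2))
    (Sxn Syn Szn Pxn Pyn Pzn : Submodule (ZMod 2) (Fin tn → ZMod 2))
    (hSxp : Sxp = Submodule.span (ZMod 2) (Fx.labWp '' {w | w ∈ Fx.VW ∧ ν w = true}))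
    (hSxn : Sxn = Submodule.span (ZMod 2) (Fx.labWn '' {w | w ∈ Fx.VW ∧ ν w = false}))
    (hSyp : Syp = Submodule.span (ZMod 2) (Fy.labWp '' {w | w ∈ Fy.VW ∧ ν w = true}))
    (hSyn : Syn = Submodule.span (ZMod 2) (Fy.labWn '' {w | w ∈ Fy.VW ∧ ν w = false}))
    (hSzp : Szp = Submodule.map f1p.mulVecLin Sxp ⊔ Submodule.map f2p.mulVecLin Syp)
    (hSzn : Szn = Submodule.map f1n.mulVecLin Sxn ⊔ Submodule.map f2n.mulVecLin Syn)
    (hPxp : Pxp = Submodule.map f1p.transpose.mulVecLin Pzp ⊔ Submodule.map gp.mulVecLin Syp)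
    (hPxn : Pxn = Submodule.map f1n.transpose.mulVecLin Pzn ⊔ Submodule.map gn.mulVecLin Syn)
    (hPyp : Pyp = Submodule.map f2p.transpose.mulVecLin Pzp ⊔
      Submodule.map gp.transpose.mulVecLin Sxp)
    (hPyn : Pyn = Submodule.map f2n.transpose.mulVecLin Pzn ⊔
      Submodule.map gn.transpose.mulVecLin Sxn) :
    (Fx.compose Fy f1p f2p gp f1n f2n gn).Shape ν Szp Szn Pzp Pzn ↔
      (Fx.Shape ν Sxp Sxn Pxp Pxn ∧ Fy.Shape ν Syp Syn Pyp Pyn) := by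
  subst hSxp hSxn hSyp hSyn hPxp hPxn hPyp hPyn
  have hSzp_eq : Szp = (Fx.compose Fy f1p f2p gp f1n f2n gn).posPart.labelSpan (Fx.VW ∪ Fy.VW)
      (ν · = true) := by
    rw [LabSub.compose_posPart, LabGraph.labelSpan_compose hdW, hSzp]; rfl
  have hSzn_eq : Szn = (Fx.compose Fy f1p f2p gp f1n f2n gn).negPart.labelSpan (Fx.VW ∪ Fy.VW)
      (ν · = false) := by
    rw [LabSub.compose_negPart, LabGraph.labelSpan_compose hdW, hSzn]; rfl
  rw [LabSub.shape_iff_of_eq hSzp_eq hSzn_eq, LabSub.compose_posPart, LabSub.compose_negPart]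
  refine forall₂_or_left.trans (and_congr ?_ ?_)
  · refine .trans (forall₂_congr fun c hc => or_congr ?_ ?_) (LabSub.shape_iff_of_eq rfl rfl).symm
    · exact LabGraph.covered_compose_iff_of_mem_left hx.posPart_edgesWithin
        hy.posPart_edgesWithin hdC hc
    · exact LabGraph.covered_compose_iff_of_mem_left hx.negPart_edgesWithin
        hy.negPart_edgesWithin hdC hc
  · refine .trans (forall₂_congr fun c hc => or_congr ?_ ?_) (LabSub.shape_iff_of_eq rfl rfl).symm
    · exact LabGraph.covered_compose_iff_of_mem_right hx.posPart_edgesWithin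
        hy.posPart_edgesWithin hdC hc
    · exact LabGraph.covered_compose_iff_of_mem_right hx.negPart_edgesWithin
        hy.negPart_edgesWithin hdC hc

/-- with Σ_x^±, Σ_y^± the spans determined by ν on F̄_x, F̄_y, with Π_z^±
arbitrary subspaces, and with Σ_z^± = f₁^±(Σ_x^±) + f₂^±(Σ_y^±),
Π_x^± = (f₁^±)ᵀ(Π_z^±) + g^±(Σ_y^±), Π_y^± = (f₂^±)ᵀ(Π_z^±) + (g^±)ᵀ(Σ_x^±),
the assignment ν is of shape (Σ_z⁺, Σ_z⁻, Π_z⁺, Π_z⁻) in F̄_z = F̄_x ⊗_{g|f₁,f₂} F̄_y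
iff ν_x is of shape (Σ_x⁺, Σ_x⁻, Π_x⁺, Π_x⁻) in F̄_x and ν_y is of shape
(Σ_y⁺, Σ_y⁻, Π_y⁺, Π_y⁻) in F̄_y. -/
theorem statement_9 {Var Cl : Type} [Fintype Var] [Fintype Cl] {tp tn : ℕ}
    (F : SignedBip Var Cl) (Fx Fy : LabSub Var Cl tp tn)
    (hx : Fx.SubgraphOf F) (hy : Fy.SubgraphOf F)
    (hdW : Disjoint Fx.VW Fy.VW) (hdC : Disjoint Fx.VC Fy.VC)
    (f1p f2p gp : Matrix (Fin tp) (Fin tp) (ZMod 2))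
    (f1n f2n gn : Matrix (Fin tn) (Fin tn) (ZMod 2))
    (ν : Var → Bool)
    (Sxp Syp Szp Pxp Pyp Pzp : Submodule (ZMod 2) (Fin tp → ZMod 2))
    (Sxn Syn Szn Pxn Pyn Pzn : Submodule (ZMod 2) (Fin tn → ZMod 2))
    (hSxp : Sxp = Submodule.span (ZMod 2) (Fx.labWp '' {w | w ∈ Fx.VW ∧ ν w = true}))
    (hSxn : Sxn = Submodule.span (ZMod 2) (Fx.labWn '' {w | w ∈ Fx.VW ∧ ν w = false}))
    (hSyp : Syp = Submodule.span (ZMod 2) (Fy.labWp '' {w | w ∈ Fy.VW ∧ ν w = true}))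
    (hSyn : Syn = Submodule.span (ZMod 2) (Fy.labWn '' {w | w ∈ Fy.VW ∧ ν w = false}))
    (hSzp : Szp = Submodule.map f1p.mulVecLin Sxp ⊔ Submodule.map f2p.mulVecLin Syp)
    (hSzn : Szn = Submodule.map f1n.mulVecLin Sxn ⊔ Submodule.map f2n.mulVecLin Syn)
    (hPxp : Pxp = Submodule.map f1p.transpose.mulVecLin Pzp ⊔ Submodule.map gp.mulVecLin Syp)
    (hPxn : Pxn = Submodule.map f1n.transpose.mulVecLin Pzn ⊔ Submodule.map gn.mulVecLin Syn)
    (hPyp : Pyp = Submodule.map f2p.transpose.mulVecLin Pzp ⊔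
      Submodule.map gp.transpose.mulVecLin Sxp)
    (hPyn : Pyn = Submodule.map f2n.transpose.mulVecLin Pzn ⊔
      Submodule.map gn.transpose.mulVecLin Sxn) :
    (Fx.compose Fy f1p f2p gp f1n f2n gn).Shape ν Szp Szn Pzp Pzn ↔
      (Fx.Shape ν Sxp Sxn Pxp Pxn ∧ Fy.Shape ν Syp Syn Pyp Pyn) :=
  statement_9_general F Fx Fy hx hy hdW hdC f1p f2p gp f1n f2n gn ν Sxp Syp Szp Pxp Pyp Pzp Sxn Syn
    Szn Pxn Pyn Pzn hSxp hSxn hSyp hSyn hSzp hSzn hPxp hPxn hPyp hPyn
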